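/- For Sandstede's vector field with b > 0 and δ = 0, the set V = {(x,y,z) ∈ ℝ³ : x ≤ 0 and y ≤ 0} is positively invariant under the flow: if a solution φ of the ODE has φ(0) ∈ V, then φ(t) ∈ V for all t ≥ 0. -/
import Mathlib
set_option maxHeartbeats 1000000

open Set Filter Topology

lemma hasDerivAt_maxSq (s : ℝ) :
    HasDerivAt (fun v : ℝ => max v 0 ^ 2) (2 * max s 0) s := by
  rcases lt_trichotomy s 0 with h | h | h
  · have hev : (fun v : ℝ => max v 0 ^ 2) =ᶠ[nhds s] fun _ => (0:ℝ) := by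
      filter_upwards [Iio_mem_nhds h] with v hv
      simp [max_eq_right (le_of_lt (mem_Iio.mp hv))]
    have h0 : HasDerivAt (fun _ : ℝ => (0:ℝ)) 0 s := hasDerivAt_const s 0
    have := h0.congr_of_eventuallyEq hev
    simpa [max_eq_right h.le] using this
  · subst h
    have key : Tendsto (slope (fun v : ℝ => max v 0 ^ 2) 0) (𝓝[≠] 0) (nhds 0) := by
      apply squeeze_zero_norm (a := fun z : ℝ => |z|)
      · intro z
        rcases lt_trichotomy z 0 with hz | hz | hz
        · simp [slope, max_eq_right hz.le]
        · simp [hz, slope]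
        · rw [slope_def_field]
          simp only [max_eq_left hz.le, max_eq_right le_rfl]
          rw [show (z^2 - 0^2)/(z - 0) = z by field_simp; ring]
          simpa using le_abs_self z
      · exact (continuous_abs.tendsto' 0 0 abs_zero).mono_left nhdsWithin_le_nhds
    have := hasDerivAt_iff_tendsto_slope.2 (by simpa using key :
      Tendsto (slope (fun v : ℝ => max v 0 ^ 2) 0) (𝓝[≠] 0) (nhds (2 * max (0:ℝ) 0)))
    exact this
  · have hev : (fun v : ℝ => max v 0 ^ 2) =ᶠ[nhds s] fun v => v ^ 2 := by
      filter_upwards [Ioi_mem_nhds h] with v hv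
      simp [max_eq_left (le_of_lt (mem_Ioi.mp hv))]
    have := (hasDerivAt_pow 2 s).congr_of_eventuallyEq hev
    simpa [max_eq_left h.le, two_mul] using this

lemma key_bound (a b c x y X Y : ℝ) (hb : 0 < b) (hX0 : 0 ≤ X) (hY0 : 0 ≤ Y)
    (hxX : x ≤ X) (hyY : y ≤ Y) (hXx : X * x = X ^ 2) (hYy : Y * y = Y ^ 2) :
    2 * X * (a * x + b * y - a * x ^ 2 + c * x * (2 - 3 * x)) +
      2 * Y * (b * x + a * y - (3 / 2) * b * x ^ 2 - (3 / 2) * a * x * y - 2 * y * c)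
    ≤ (2 * |a| + 2 * b + 4 * |c| + (6 * |c| + 3 * |a|) * |x|) * (X ^ 2 + Y ^ 2) := by
  have expand : 2 * X * (a * x + b * y - a * x ^ 2 + c * x * (2 - 3 * x)) +
      2 * Y * (b * x + a * y - (3 / 2) * b * x ^ 2 - (3 / 2) * a * x * y - 2 * y * c)
      = 2 * a * X ^ 2 + 2 * b * (X * y) - 2 * a * (X ^ 2 * x) + 4 * c * X ^ 2
        - 6 * c * (X ^ 2 * x) + 2 * b * (Y * x) + 2 * a * Y ^ 2 - 3 * b * (Y * x ^ 2)
        - 3 * a * (Y ^ 2 * x) - 4 * c * Y ^ 2 := by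
    linear_combination (2 * a + 4 * c - 2 * a * x - 6 * c * x) * hXx +
      (2 * a - 3 * a * x - 4 * c) * hYy
  rw [expand]
  have hax : (0:ℝ) ≤ |a| * |x| + a * x := by rw [← abs_mul]; linarith [neg_abs_le (a * x)]
  have hcx : (0:ℝ) ≤ |c| * |x| + c * x := by rw [← abs_mul]; linarith [neg_abs_le (c * x)]
  have hA : 2 * a * X ^ 2 ≤ 2 * |a| * X ^ 2 := by
    linarith [mul_nonneg (sub_nonneg.2 (le_abs_self a)) (sq_nonneg X)]
  have hB : 2 * b * (X * y) ≤ b * (X ^ 2 + Y ^ 2) := by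
    have h1 : X * y ≤ X * Y := mul_le_mul_of_nonneg_left hyY hX0
    nlinarith [sq_nonneg (X - Y), hb.le, mul_le_mul_of_nonneg_left
      (show 2 * (X * y) ≤ X ^ 2 + Y ^ 2 by nlinarith [sq_nonneg (X - Y)]) hb.le]
  have hC : -(2 * a * (X ^ 2 * x)) ≤ 2 * (|a| * |x|) * X ^ 2 := by
    linarith [mul_nonneg hax (sq_nonneg X)]
  have hD : 4 * c * X ^ 2 ≤ 4 * |c| * X ^ 2 := by
    linarith [mul_nonneg (sub_nonneg.2 (le_abs_self c)) (sq_nonneg X)]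
  have hE : -(6 * c * (X ^ 2 * x)) ≤ 6 * (|c| * |x|) * X ^ 2 := by
    linarith [mul_nonneg hcx (sq_nonneg X)]
  have hF : 2 * b * (Y * x) ≤ b * (X ^ 2 + Y ^ 2) := by
    have h1 : Y * x ≤ Y * X := mul_le_mul_of_nonneg_left hxX hY0
    nlinarith [sq_nonneg (X - Y), mul_le_mul_of_nonneg_left
      (show 2 * (Y * x) ≤ X ^ 2 + Y ^ 2 by nlinarith [sq_nonneg (X - Y)]) hb.le]
  have hG : 2 * a * Y ^ 2 ≤ 2 * |a| * Y ^ 2 := by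
    linarith [mul_nonneg (sub_nonneg.2 (le_abs_self a)) (sq_nonneg Y)]
  have hH : -(3 * b * (Y * x ^ 2)) ≤ 0 := by
    have := mul_nonneg hb.le (mul_nonneg hY0 (sq_nonneg x)); linarith
  have hI : -(3 * a * (Y ^ 2 * x)) ≤ 3 * (|a| * |x|) * Y ^ 2 := by
    linarith [mul_nonneg hax (sq_nonneg Y)]
  have hJ : -(4 * c * Y ^ 2) ≤ 4 * |c| * Y ^ 2 := by
    linarith [mul_nonneg (sub_nonneg.2 (neg_abs_le c)) (sq_nonneg Y)]
  have s1 : (0:ℝ) ≤ |a| * |x| * X ^ 2 :=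
    mul_nonneg (mul_nonneg (abs_nonneg a) (abs_nonneg x)) (sq_nonneg X)
  have s2 : (0:ℝ) ≤ |c| * |x| * Y ^ 2 :=
    mul_nonneg (mul_nonneg (abs_nonneg c) (abs_nonneg x)) (sq_nonneg Y)
  linarith [hA, hB, hC, hD, hE, hF, hG, hH, hI, hJ, s1, s2]

/-- First component of Sandstede's vector field. -/
def P1 (a b α μ μt δ x y z : ℝ) : ℝ :=
  a * x + b * y - a * x ^ 2 + (μt - α * z) * x * (2 - 3 * x) + δ * z

/-- Second component of Sandstede's vector field. -/
noncomputable def P2 (a b α μ μt δ x y z : ℝ) : ℝ :=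
  b * x + a * y - (3 / 2) * b * x ^ 2 - (3 / 2) * a * x * y - 2 * y * (μt - α * z) - δ * z

/-- Third component of Sandstede's vector field. -/
def P3 (c α β γ μ x y z : ℝ) : ℝ :=
  c * z + μ * x + γ * x * z + α * β * (x ^ 2 * (1 - x) - y ^ 2)

/-- For Sandstede's vector field with `b > 0` and `δ = 0`, the set
`V = {(x,y,z) : x ≤ 0 ∧ y ≤ 0}` is positively invariant: any solution starting in `V`
remains in `V` for all `t ≥ 0`. -/
theorem sandstede_V_positively_invariant (a b c α β γ μ μt δ : ℝ)
    (hb : 0 < b) (hδ : δ = 0) (x y z : ℝ → ℝ)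
    (hx : ∀ t, HasDerivAt x (P1 a b α μ μt δ (x t) (y t) (z t)) t)
    (hy : ∀ t, HasDerivAt y (P2 a b α μ μt δ (x t) (y t) (z t)) t)
    (hz : ∀ t, HasDerivAt z (P3 c α β γ μ (x t) (y t) (z t)) t)
    (h0 : x 0 ≤ 0 ∧ y 0 ≤ 0) :
    ∀ t ≥ (0 : ℝ), x t ≤ 0 ∧ y t ≤ 0 := by
  subst hδ
  intro T hT
  -- the Lyapunov-type function
  set u : ℝ → ℝ := fun s => max (x s) 0 ^ 2 + max (y s) 0 ^ 2 with hu_def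
  set u' : ℝ → ℝ := fun s =>
    2 * max (x s) 0 * P1 a b α μ μt 0 (x s) (y s) (z s) +
    2 * max (y s) 0 * P2 a b α μ μt 0 (x s) (y s) (z s) with hu'_def
  have hu : ∀ s, HasDerivAt u (u' s) s := by
    intro s
    exact ((hasDerivAt_maxSq (x s)).comp s (hx s)).add
      ((hasDerivAt_maxSq (y s)).comp s (hy s))
  -- the coefficient function
  set k : ℝ → ℝ := fun s =>
    2 * |a| + 2 * b + 4 * |μt - α * z s| + (6 * |μt - α * z s| + 3 * |a|) * |x s|
    with hk_def
  have hxc : Continuous x := by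
    refine continuous_iff_continuousAt.2 fun s => (hx s).continuousAt
  have hzc : Continuous z := by
    refine continuous_iff_continuousAt.2 fun s => (hz s).continuousAt
  have hkc : Continuous k := by
    rw [hk_def]
    continuity
  obtain ⟨s₀, hs₀, hmax⟩ := isCompact_Icc.exists_isMaxOn (nonempty_Icc.2 hT)
    (hkc.continuousOn (s := Icc (0:ℝ) T))
  have hKmax : ∀ w ∈ Icc (0:ℝ) T, k w ≤ k s₀ := fun w hw => hmax hw
  set K := k s₀ with hK_def
  have hu_nonneg : ∀ s, 0 ≤ u s := fun s => add_nonneg (sq_nonneg _) (sq_nonneg _)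
  have gr : ∀ s ∈ Icc (0:ℝ) T, u s ≤ gronwallBound 0 K 0 (s - 0) := by
    apply le_gronwallBound_of_liminf_deriv_right_le (f' := u')
    · exact fun s _ => (hu s).continuousAt.continuousWithinAt
    · intro s _ r hr
      have ht : Tendsto (slope u s) (𝓝[≠] s) (nhds (u' s)) :=
        hasDerivAt_iff_tendsto_slope.1 (hu s)
      have hev : ∀ᶠ w in 𝓝[≠] s, slope u s w < r := ht.eventually_lt_const hr
      have hev' : ∀ᶠ w in 𝓝[>] s, slope u s w < r :=
        hev.filter_mono (nhdsWithin_mono s fun w hw => ne_of_gt hw)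
      refine (hev'.mono fun w hw => ?_).frequently
      rwa [slope_def_field, div_eq_inv_mul] at hw
    · -- initial condition
      simp only [hu_def, max_eq_right h0.1, max_eq_right h0.2]
      norm_num
    · -- the differential inequality
      intro s hs
      have hXx : max (x s) 0 * x s = max (x s) 0 ^ 2 := by
        rcases le_total (x s) 0 with h | h
        · simp [max_eq_right h]
        · simp [max_eq_left h]; ring
      have hYy : max (y s) 0 * y s = max (y s) 0 ^ 2 := by
        rcases le_total (y s) 0 with h | h
        · simp [max_eq_right h]
        · simp [max_eq_left h]; ring
      have hk := key_bound a b (μt - α * z s) (x s) (y s) (max (x s) 0) (max (y s) 0)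
        hb (le_max_right _ _) (le_max_right _ _) (le_max_left _ _) (le_max_left _ _)
          hXx hYy
      have heq : u' s = 2 * max (x s) 0 *
          (a * x s + b * y s - a * x s ^ 2 + (μt - α * z s) * x s * (2 - 3 * x s)) +
          2 * max (y s) 0 * (b * x s + a * y s - (3 / 2) * b * x s ^ 2
            - (3 / 2) * a * x s * y s - 2 * y s * (μt - α * z s)) := by
        simp only [hu'_def, P1, P2]; ring
      have hks : k s ≤ K := hKmax s ⟨hs.1, hs.2.le⟩
      have : u' s ≤ k s * u s := by rw [heq, hu_def]; exact hk
      have h2 : k s * u s ≤ K * u s := mul_le_mul_of_nonneg_right hks (hu_nonneg s)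
      linarith
  have huT : u T ≤ 0 := by
    have := gr T (right_mem_Icc.2 hT)
    rwa [gronwallBound_ε0_δ0] at this
  have hx2 : max (x T) 0 ^ 2 = 0 := by
    have := sq_nonneg (max (x T) 0); have := sq_nonneg (max (y T) 0)
    simp only [hu_def] at huT; linarith
  have hy2 : max (y T) 0 ^ 2 = 0 := by
    have := sq_nonneg (max (x T) 0); have := sq_nonneg (max (y T) 0)
    simp only [hu_def] at huT; linarith
  constructor
  · have := pow_eq_zero_iff (two_ne_zero) |>.1 hx2
    exact max_eq_right_iff.1 this
  · have := pow_eq_zero_iff (two_ne_zero) |>.1 hy2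
    exact max_eq_right_iff.1 this
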